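/- arXiv:1902.04920 — 2 statements merged into one kernel-verified Lean document; each statement's English description precedes it below -/
import Mathlib

section
/- For every ε > 0 and every x > 0, the second derivative of x ↦ ln(G_ε(x)), which equals (1/ε²)·(exp(x/ε)/(1 + exp(x/ε))²)·(1/ln(1 + exp(x/ε)))·(1 − exp(x/ε)/ln(1 + exp(x/ε))), satisfies −1/x² < (ln G_ε)''(x) < exp(−x/ε)/(ε·x) − 1/((1 + exp(−x/ε))²·(x + ε·ln 2)²). -/
/-- For `ε > 0`, the smooth approximation `G_ε(x) = ε · ln(1 + exp(x/ε))` of `max(x, 0)`. -/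
noncomputable def Geps (ε x : ℝ) : ℝ := ε * Real.log (1 + Real.exp (x / ε))

/-- The second derivative of `x ↦ ln(G_ε(x))`:
`(ln G_ε)''(x) = (1/ε²)·(exp(x/ε)/(1 + exp(x/ε))²)·(1/ln(1 + exp(x/ε)))·(1 − exp(x/ε)/ln(1 + exp(x/ε)))`. -/
noncomputable def logGepsDeriv2 (ε x : ℝ) : ℝ :=
  (1 / ε ^ 2) * (Real.exp (x / ε) / (1 + Real.exp (x / ε)) ^ 2) *
    (1 / Real.log (1 + Real.exp (x / ε))) *
    (1 - Real.exp (x / ε) / Real.log (1 + Real.exp (x / ε)))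

/-!
Rescaling gives `(ln G_ε)''(x) = ε⁻² (ln G_1)''(x / ε)`, so it suffices to take `ε = 1`.
With `e = exp t` and `L = log (1 + e)`, `(ln G_1)''(t) = e (L - e) / ((1 + e)² L²)`, and
everything rests on `t < L < t + log 2`.
Lower bound: the expression exceeds `-e² / ((1 + e)² L²) ≥ -1 / L² > -1 / t²`.
Upper bound: split it as `e / ((1 + e)² L) - e² / ((1 + e)² L²)`; the first term is below
`1 / (e t)` and the second above `e² / ((1 + e)² (t + log 2)²)`, which is the claimed bound
once `exp (-t) = e⁻¹` is substituted.
-/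

open Real

lemma lt_log_one_add_exp (t : ℝ) : t < log (1 + exp t) := by
  simpa using log_lt_log (exp_pos t) (lt_one_add (exp t))

lemma log_one_add_exp_lt_add_log_two {t : ℝ} (ht : 0 < t) : log (1 + exp t) < t + log 2 := by
  have h : 1 + exp t < 2 * exp t := by linarith [one_lt_exp_iff.mpr ht]
  calc log (1 + exp t) < log (2 * exp t) := log_lt_log (by positivity) h
    _ = t + log 2 := by rw [log_mul two_ne_zero (exp_pos t).ne', log_exp, add_comm]

lemma log_one_add_exp_pos (t : ℝ) : 0 < log (1 + exp t) :=
  log_pos (lt_add_of_pos_right 1 (exp_pos t))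

lemma logGepsDeriv2_eq_div_sq (ε x : ℝ) :
    logGepsDeriv2 ε x = logGepsDeriv2 1 (x / ε) / ε ^ 2 := by
  simp only [logGepsDeriv2, div_one]
  ring

lemma logGepsDeriv2_one_eq (t : ℝ) :
    logGepsDeriv2 1 t =
      exp t * (log (1 + exp t) - exp t) / ((1 + exp t) ^ 2 * log (1 + exp t) ^ 2) := by
  have := (log_one_add_exp_pos t).ne'
  simp only [logGepsDeriv2, div_one]
  field_simp

lemma neg_one_div_sq_lt_logGepsDeriv2_one {t : ℝ} (ht : 0 < t) :
    -(1 / t ^ 2) < logGepsDeriv2 1 t := by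
  set e := exp t
  set L := log (1 + e)
  have hL : 0 < L := log_one_add_exp_pos t
  have he : 0 < e := exp_pos t
  rw [logGepsDeriv2_one_eq]
  calc -(1 / t ^ 2) < -(1 / L ^ 2) := by
        gcongr
        exact lt_log_one_add_exp t
    _ ≤ -(e ^ 2 / ((1 + e) ^ 2 * L ^ 2)) := by
        rw [neg_le_neg_iff, div_le_div_iff₀ (by positivity) (by positivity), one_mul]
        gcongr
        linarith
    _ < e * (L - e) / ((1 + e) ^ 2 * L ^ 2) := by
        rw [neg_div', div_lt_div_iff_of_pos_right (by positivity)]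
        nlinarith [mul_pos he hL]

lemma logGepsDeriv2_one_lt {t : ℝ} (ht : 0 < t) :
    logGepsDeriv2 1 t < exp (-t) / t - 1 / ((1 + exp (-t)) ^ 2 * (t + log 2) ^ 2) := by
  rw [logGepsDeriv2_one_eq, exp_neg]
  set e := exp t
  set L := log (1 + e)
  have hL : 0 < L := log_one_add_exp_pos t
  have he : 0 < e := exp_pos t
  calc e * (L - e) / ((1 + e) ^ 2 * L ^ 2)
        = e / ((1 + e) ^ 2 * L) - e ^ 2 / ((1 + e) ^ 2 * L ^ 2) := by
        field_simp
    _ < e / (e ^ 2 * t) - e ^ 2 / ((1 + e) ^ 2 * (t + log 2) ^ 2) := by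
        gcongr ?_ - ?_
        · gcongr
          · exact lt_one_add e
          · exact lt_log_one_add_exp t
        · gcongr
          exact log_one_add_exp_lt_add_log_two ht
    _ = e⁻¹ / t - 1 / ((1 + e⁻¹) ^ 2 * (t + log 2) ^ 2) := by
        field_simp
        ring

lemma hasDerivAt_exp_div (ε y : ℝ) :
    HasDerivAt (fun z => exp (z / ε)) (exp (y / ε) / ε) y := by
  simpa [div_eq_mul_inv] using ((hasDerivAt_id y).div_const ε).exp

lemma hasDerivAt_log_one_add_exp_div (ε y : ℝ) :
    HasDerivAt (fun z => log (1 + exp (z / ε))) (exp (y / ε) / (ε * (1 + exp (y / ε)))) y := by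
  convert ((hasDerivAt_exp_div ε y).const_add 1).log (by positivity) using 1
  rw [div_div, mul_comm]

lemma deriv_log_geps {ε : ℝ} (hε : ε ≠ 0) :
    deriv (fun z => log (Geps ε z)) =
      fun y => exp (y / ε) / (ε * (1 + exp (y / ε)) * log (1 + exp (y / ε))) := by
  funext y
  have hL := (log_one_add_exp_pos (y / ε)).ne'
  have hG : Geps ε y ≠ 0 := mul_ne_zero hε hL
  refine (((hasDerivAt_log_one_add_exp_div ε y).const_mul ε).log hG).deriv.trans ?_
  field_simp [Geps]

lemma hasDerivAt_deriv_log_geps {ε : ℝ} (hε : ε ≠ 0) (x : ℝ) :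
    HasDerivAt (deriv fun z => log (Geps ε z)) (logGepsDeriv2 ε x) x := by
  rw [deriv_log_geps hε]
  have hL := (log_one_add_exp_pos (x / ε)).ne'
  have hE : 1 + exp (x / ε) ≠ 0 := by positivity
  refine ((hasDerivAt_exp_div ε x).fun_div
    (((hasDerivAt_exp_div ε x).const_add 1).const_mul ε |>.fun_mul
      (hasDerivAt_log_one_add_exp_div ε x)) (mul_ne_zero (mul_ne_zero hε hE) hL)).congr_deriv ?_
  simp only [logGepsDeriv2]
  field_simp
  ring

/-- For every `ε > 0` and every `x > 0`, the second derivative of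
`x ↦ ln(G_ε(x))`, which equals
`(1/ε²)·(exp(x/ε)/(1 + exp(x/ε))²)·(1/ln(1 + exp(x/ε)))·(1 − exp(x/ε)/ln(1 + exp(x/ε)))`,
satisfies `−1/x² < (ln G_ε)''(x) < exp(−x/ε)/(ε·x) − 1/((1 + exp(−x/ε))²·(x + ε·ln 2)²)`. -/
theorem log_geps_second_deriv_bounds_pos (ε : ℝ) (hε : 0 < ε) (x : ℝ) (hx : 0 < x) :
    deriv (deriv (fun z : ℝ => Real.log (Geps ε z))) x = logGepsDeriv2 ε x ∧
      -(1 / x ^ 2) < logGepsDeriv2 ε x ∧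
      logGepsDeriv2 ε x <
        Real.exp (-x / ε) / (ε * x) -
          1 / ((1 + Real.exp (-x / ε)) ^ 2 * (x + ε * Real.log 2) ^ 2) := by
  have ht : 0 < x / ε := div_pos hx hε
  refine ⟨(hasDerivAt_deriv_log_geps hε.ne' x).deriv, ?_, ?_⟩ <;> rw [logGepsDeriv2_eq_div_sq]
  · calc -(1 / x ^ 2) = -(1 / (x / ε) ^ 2) / ε ^ 2 := by field_simp
      _ < logGepsDeriv2 1 (x / ε) / ε ^ 2 := by
        gcongr
        exact neg_one_div_sq_lt_logGepsDeriv2_one ht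
  · calc logGepsDeriv2 1 (x / ε) / ε ^ 2
        < (exp (-(x / ε)) / (x / ε) -
            1 / ((1 + exp (-(x / ε))) ^ 2 * (x / ε + log 2) ^ 2)) / ε ^ 2 := by
          gcongr
          exact logGepsDeriv2_one_lt ht
      _ = _ := by
          rw [neg_div]
          field_simp
end

section
/- Let ε > 0, λ > 0, and T > 0. Suppose that for every channel i with 1 ≤ i ≤ K, the vectors ( (φ_j(y_l))_{l=0,…,M} )_{j∈I_i} are linearly independent in ℝ^{M+1}. Then the regularized objective function ω ↦ (1/T)·[ −Σ_{i=1}^K Σ_{k=1}^{M_i} ln G_ε( Σ_{j∈I_i} ω_j φ_j(y_{l^{(i)}_k}) ) + Σ_{l=0}^M t_l·Σ_{i=1}^K G_ε( Σ_{j∈I_i} ω_j φ_j(y_l) ) ] + λ·Σ_{j=1}^N |ω_j| is strictly convex on all of ℝ^N. -/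
/-!
The objective is `(1/T)(A + B) + λ C`, where `C = Σ |ω_j|` is convex, `A` is a sum of
`-log G_ε` composed with linear forms and `B = Σ_{i,l} t_l G_ε(Λω (i,l))` for the linear map
`Λω (i,l) = Σ_{j∈I_i} ω_j φ_j(y_l)`. Both `G_ε` and `-log G_ε` are convex on `ℝ`, and `G_ε` is
strictly convex, so `B` is strictly convex as soon as `Λ` is injective. Injectivity is the linear independence hypothesis: if `Λω = 0`, then for
each channel `i` the combination `Σ_{j∈I_i} ω_j (φ_j(y_l))_l` vanishes, so `ω_j = 0` on `I_i`,
and the channels cover all indices.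
-/

open Finset

open Real Function

section Convexity

variable {𝕜 E β ι : Type*}

theorem ConvexOn.finset_sum [Semiring 𝕜] [PartialOrder 𝕜] [AddCommMonoid E] [SMul 𝕜 E]
    [AddCommMonoid β] [PartialOrder β] [IsOrderedAddMonoid β] [Module 𝕜 β]
    {s : Set E} (hs : Convex 𝕜 s) (t : Finset ι) {f : ι → E → β}
    (hf : ∀ i ∈ t, ConvexOn 𝕜 s (f i)) : ConvexOn 𝕜 s fun x => ∑ i ∈ t, f i x := by
  classical
  induction t using Finset.induction_on with
  | empty => simpa using convexOn_const (0 : β) hs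
  | insert i t hi ih =>
    simp only [sum_insert hi]
    exact (hf i (mem_insert_self i t)).add (ih fun j hj => hf j (mem_insert_of_mem hj))

theorem StrictConvexOn.smul [CommSemiring 𝕜] [PartialOrder 𝕜] [AddCommMonoid E] [SMul 𝕜 E]
    [AddCommMonoid β] [PartialOrder β] [Module 𝕜 β] [PosSMulStrictMono 𝕜 β]
    {s : Set E} {f : E → β} {c : 𝕜} (hc : 0 < c) (hf : StrictConvexOn 𝕜 s f) :
    StrictConvexOn 𝕜 s fun x => c • f x :=
  ⟨hf.1, fun x hx y hy hxy a b ha hb hab =>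
    calc
      c • f (a • x + b • y) < c • (a • f x + b • f y) :=
        smul_lt_smul_of_pos_left (hf.2 hx hy hxy ha hb hab) hc
      _ = a • c • f x + b • c • f y := by rw [smul_add, smul_comm c, smul_comm c]⟩

theorem StrictConvexOn.comp_linearMap_of_injective {F : Type*} [Semiring 𝕜] [PartialOrder 𝕜]
    [AddCommMonoid E] [AddCommMonoid F] [Module 𝕜 E] [Module 𝕜 F]
    [AddCommMonoid β] [PartialOrder β] [SMul 𝕜 β] {s : Set F} {f : F → β}
    (hf : StrictConvexOn 𝕜 s f) {g : E →ₗ[𝕜] F} (hg : Injective g) :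
    StrictConvexOn 𝕜 (g ⁻¹' s) (f ∘ g) :=
  ⟨hf.1.linear_preimage _, fun x hx y hy hxy a b ha hb hab =>
    calc
      f (g (a • x + b • y)) = f (a • g x + b • g y) := by rw [g.map_add, g.map_smul, g.map_smul]
      _ < a • f (g x) + b • f (g y) := hf.2 hx hy (hg.ne hxy) ha hb hab⟩

theorem strictConvexOn_univ_sum_apply [Fintype ι] [Semiring 𝕜] [PartialOrder 𝕜]
    [AddCommMonoid E] [Module 𝕜 E] [AddCommMonoid β] [PartialOrder β]
    [IsOrderedCancelAddMonoid β] [Module 𝕜 β] {f : ι → E → β}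
    (hf : ∀ i, StrictConvexOn 𝕜 Set.univ (f i)) :
    StrictConvexOn 𝕜 Set.univ fun x : ι → E => ∑ i, f i (x i) := by
  refine ⟨convex_univ, fun x _ y _ hxy a b ha hb hab => ?_⟩
  obtain ⟨i₀, hi₀⟩ := ne_iff.mp hxy
  simp only [Pi.add_apply, Pi.smul_apply, smul_sum, ← sum_add_distrib]
  exact sum_lt_sum
    (fun i _ => (hf i).convexOn.2 (Set.mem_univ (x i)) (Set.mem_univ (y i)) ha.le hb.le hab)
    ⟨i₀, mem_univ _, (hf i₀).2 (Set.mem_univ (x i₀)) (Set.mem_univ (y i₀)) hi₀ ha hb hab⟩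

end Convexity

section Channels

variable {R ι κ τ : Type*}

def channelMap [CommSemiring R] (I : κ → Finset ι) (v : ι → τ → R) :
    (ι → R) →ₗ[R] (κ × τ → R) where
  toFun ω p := ∑ j ∈ I p.1, ω j * v j p.2
  map_add' ω ω' := by ext p; simp only [Pi.add_apply, add_mul, sum_add_distrib]
  map_smul' c ω := by
    ext p; simp only [Pi.smul_apply, smul_eq_mul, RingHom.id_apply, mul_sum, mul_assoc]

theorem channelMap_injective [CommRing R] {I : κ → Finset ι} (hI : ∀ j, ∃ i, j ∈ I i)
    {v : ι → τ → R} (hv : ∀ i, LinearIndependent R fun j : I i => v j) :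
    Injective (channelMap I v) := by
  refine (injective_iff_map_eq_zero _).mpr fun ω hω => funext fun j => ?_
  obtain ⟨i, hj⟩ := hI j
  refine Fintype.linearIndependent_iff.mp (hv i) (fun k => ω k) (funext fun l => ?_) ⟨j, hj⟩
  simp only [Finset.sum_apply, Pi.smul_apply, smul_eq_mul, Pi.zero_apply]
  rw [sum_coe_sort (I i) fun k => ω k * v k l]
  exact congrFun hω (i, l)

end Channels

section Geps

variable {ε : ℝ}

theorem Geps_pos (hε : 0 < ε) (x : ℝ) : 0 < Geps ε x :=
  mul_pos hε (log_pos (lt_add_of_pos_right 1 (exp_pos _)))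

theorem continuous_Geps : Continuous (Geps ε) :=
  continuous_const.mul ((continuous_const.add (continuous_id.div_const ε).rexp).log
    fun x => (by positivity : (0 : ℝ) < 1 + exp (x / ε)).ne')

theorem hasDerivAt_Geps (hε : ε ≠ 0) (x : ℝ) :
    HasDerivAt (Geps ε) (exp (x / ε) / (1 + exp (x / ε))) x := by
  have h := ((((hasDerivAt_id' x).div_const ε).exp.const_add 1).log (by positivity)).const_mul ε
  refine h.congr_deriv ?_
  field_simp

theorem deriv_Geps (hε : ε ≠ 0) : deriv (Geps ε) = fun x => exp (x / ε) / (1 + exp (x / ε)) :=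
  funext fun x => (hasDerivAt_Geps hε x).deriv

theorem hasDerivAt_deriv_Geps (hε : ε ≠ 0) (x : ℝ) :
    HasDerivAt (deriv (Geps ε)) (exp (x / ε) / (ε * (1 + exp (x / ε)) ^ 2)) x := by
  have he := ((hasDerivAt_id' x).div_const ε).exp
  rw [deriv_Geps hε]
  refine (he.div (he.const_add 1) (by positivity)).congr_deriv ?_
  field_simp
  ring

theorem strictConvexOn_Geps (hε : 0 < ε) : StrictConvexOn ℝ Set.univ (Geps ε) := by
  refine strictConvexOn_univ_of_deriv2_pos continuous_Geps fun x => ?_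
  rw [iterate_succ_apply', iterate_one, (hasDerivAt_deriv_Geps hε.ne' x).deriv]
  positivity

/-- The second derivative `(G'² - G'' G) / G²` of `-log G` is nonnegative because
`log (1 + eᵘ) ≤ eᵘ`. -/
theorem convexOn_neg_log_Geps (hε : 0 < ε) : ConvexOn ℝ Set.univ fun x => -log (Geps ε x) := by
  refine convexOn_of_hasDerivWithinAt2_nonneg convex_univ
    (f' := fun x => -(deriv (Geps ε) x / Geps ε x))
    (f'' := fun x => exp (x / ε) * (exp (x / ε) - log (1 + exp (x / ε)))
      / (1 + exp (x / ε)) ^ 2 / Geps ε x ^ 2)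
    (continuous_Geps.log fun x => (Geps_pos hε x).ne').neg.continuousOn
    (fun x _ => ?_) (fun x _ => ?_) (fun x _ => ?_)
  · rw [deriv_Geps hε.ne']
    exact ((hasDerivAt_Geps hε.ne' x).log (Geps_pos hε x).ne').neg.hasDerivWithinAt
  · refine ((hasDerivAt_deriv_Geps hε.ne' x).div (hasDerivAt_Geps hε.ne' x)
      (Geps_pos hε x).ne').neg.hasDerivWithinAt.congr_deriv ?_
    rw [deriv_Geps hε.ne']
    unfold Geps
    field_simp
    ring
  · have hlog : log (1 + exp (x / ε)) ≤ exp (x / ε) := by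
      linarith [log_le_sub_one_of_pos (show 0 < 1 + exp (x / ε) by positivity)]
    have := sub_nonneg.mpr hlog
    positivity

end Geps

theorem regularized_objective_strictly_convex_general
    (ε lam T : ℝ) (hε : 0 < ε) (hlam : 0 < lam) (hT : 0 < T)
    (N K M : ℕ)
    (X : Type*) (φ : Fin N → X → ℝ)
    (I : Fin K → Finset (Fin N))
    (hpart : ∀ j : Fin N, ∃! i : Fin K, j ∈ I i)
    (y : Fin (M + 1) → X) (t : Fin (M + 1) → ℝ) (ht : ∀ l, 0 < t l)
    (chan : Fin M → Fin K)
    (hli : ∀ i : Fin K, LinearIndependent ℝ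
      (fun j : (I i : Finset (Fin N)) => fun l : Fin (M + 1) => φ j.1 (y l))) :
    StrictConvexOn ℝ Set.univ (fun ω : Fin N → ℝ =>
      (1 / T) *
        (-(∑ l : Fin M,
            Real.log (Geps ε (∑ j ∈ I (chan l), ω j * φ j (y l.castSucc))))
          + ∑ l : Fin (M + 1), t l *
              ∑ i : Fin K, Geps ε (∑ j ∈ I i, ω j * φ j (y l)))
        + lam * ∑ j : Fin N, |ω j|) := by
  set Λ := channelMap I fun j l => φ j (y l)
  have hΛ : Injective Λ := channelMap_injective (fun j => (hpart j).exists) hli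
  have hA : ConvexOn ℝ Set.univ fun ω : Fin N → ℝ =>
      -(∑ l : Fin M, log (Geps ε (∑ j ∈ I (chan l), ω j * φ j (y l.castSucc)))) :=
    (ConvexOn.finset_sum convex_univ univ fun l _ => (convexOn_neg_log_Geps hε).comp_linearMap
      (LinearMap.proj (chan l, l.castSucc) ∘ₗ Λ)).congr fun ω _ => by
      simp only [comp_apply, sum_neg_distrib]
      rfl
  have hB : StrictConvexOn ℝ Set.univ fun ω : Fin N → ℝ =>
      ∑ l : Fin (M + 1), t l * ∑ i : Fin K, Geps ε (∑ j ∈ I i, ω j * φ j (y l)) := by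
    refine ((strictConvexOn_univ_sum_apply fun p : Fin K × Fin (M + 1) =>
      (strictConvexOn_Geps hε).smul (ht p.2)).comp_linearMap_of_injective hΛ).congr fun ω _ => ?_
    simp only [comp_apply, smul_eq_mul, Fintype.sum_prod_type_right, mul_sum]
    rfl
  have hC : ConvexOn ℝ Set.univ fun ω : Fin N → ℝ => ∑ j : Fin N, |ω j| :=
    ConvexOn.finset_sum convex_univ univ fun j _ =>
      (convexOn_univ_norm (E := ℝ)).comp_linearMap (LinearMap.proj (φ := fun _ => ℝ) j)
  exact ((hA.add_strictConvexOn hB).smul (one_div_pos.mpr hT)).add_convexOn (hC.smul hlam.le)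

/-- Let `ε > 0`, `λ > 0`, `T > 0`. If for every channel `i` the
vectors `((φ_j(y_l))_{l=0,…,M})_{j∈I_i}` are linearly independent in `ℝ^{M+1}`, then the
regularized objective
`ω ↦ (1/T)·[−Σ_i Σ_k ln G_ε(Σ_{j∈I_i} ω_j φ_j(y_{l^{(i)}_k}))
  + Σ_l t_l·Σ_i G_ε(Σ_{j∈I_i} ω_j φ_j(y_l))] + λ·Σ_j |ω_j|`
is strictly convex on all of `ℝ^N`. -/
theorem regularized_objective_strictly_convex
    (ε lam T : ℝ) (hε : 0 < ε) (hlam : 0 < lam) (hT : 0 < T)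
    (N K M : ℕ) (hN : 1 ≤ N) (hK : 1 ≤ K) (hM : 1 ≤ M)
    (X : Type*) (φ : Fin N → X → ℝ)
    (I : Fin K → Finset (Fin N))
    (hpart : ∀ j : Fin N, ∃! i : Fin K, j ∈ I i)
    (y : Fin (M + 1) → X) (t : Fin (M + 1) → ℝ) (ht : ∀ l, 0 < t l)
    (chan : Fin M → Fin K)
    (hli : ∀ i : Fin K, LinearIndependent ℝ
      (fun j : (I i : Finset (Fin N)) => fun l : Fin (M + 1) => φ j.1 (y l))) :
    StrictConvexOn ℝ Set.univ (fun ω : Fin N → ℝ =>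
      (1 / T) *
        (-(∑ l : Fin M,
            Real.log (Geps ε (∑ j ∈ I (chan l), ω j * φ j (y l.castSucc))))
          + ∑ l : Fin (M + 1), t l *
              ∑ i : Fin K, Geps ε (∑ j ∈ I i, ω j * φ j (y l)))
        + lam * ∑ j : Fin N, |ω j|) :=
  regularized_objective_strictly_convex_general ε lam T hε hlam hT N K M X φ I hpart y t ht chan hli
end
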